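/- Let (R, m, k) be an Artinian local ring with infinite residue field k, let M be an R-module, and let V be a k-vector subspace of the socle soc(R) = (0 :_R m). Assume that for every nonzero Δ ∈ soc(R) one has l(ΔM) ≥ dim_k V, where l denotes length. Then there exists an R-module homomorphism φ : R → M whose restriction to V is injective. In particular, if V = soc(R), then there exists an R-module homomorphism φ : R → M that is injective. -/

import Mathlib

open Filter IsLocalRing

universe u v

/-- The `e`-th Frobenius pushforward `F_*^e M` of an `R`-module `M`:
the same underlying abelian group, with `R` acting through the `e`-th iterate
of the Frobenius endomorphism `r ↦ r ^ p`. -/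
def FrobPush (p e : ℕ) (M : Type v) : Type v := M

/-- Regard an element of `M` as an element of `F_*^e M`. -/
def FrobPush.mk (p e : ℕ) {M : Type v} (m : M) : FrobPush p e M := m

instance FrobPush.instAddCommGroup {p e : ℕ} {M : Type v} [AddCommGroup M] :
    AddCommGroup (FrobPush p e M) := inferInstanceAs (AddCommGroup M)

instance FrobPush.instModule {R : Type u} [CommSemiring R] {p : ℕ} [ExpChar R p] {e : ℕ}
    {M : Type v} [AddCommGroup M] [Module R M] : Module R (FrobPush p e M) :=
  Module.compHom M (iterateFrobenius R p e)

/-- `R` is `F`-finite: `R` is module-finite over itself via the Frobenius endomorphism. -/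
def IsFFinite (R : Type u) [CommRing R] (p : ℕ) [ExpChar R p] : Prop :=
  RingHom.Finite (frobenius R p)

/-- `b_{p^e}(M)`: the largest `n` such that there is a surjective `R`-linear map
`F_*^e M ↠ M^n`. -/
noncomputable def frobSurjNumber (R : Type u) [CommRing R] (p : ℕ) [ExpChar R p] (e : ℕ)
    (M : Type v) [AddCommGroup M] [Module R M] : ℕ :=
  sSup {n : ℕ | ∃ f : FrobPush p e M →ₗ[R] (Fin n → M), Function.Surjective f}

/-- The dual `F`-signature `s(M) = limsup_e b_{p^e}(M) / p^{e (d + α)}`, where `d` is the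
Krull dimension of `R` and `α = log_p [k : k^p]`. -/
noncomputable def dualFSignature (R : Type u) [CommRing R] (p : ℕ) [ExpChar R p]
    (M : Type v) [AddCommGroup M] [Module R M] (d α : ℕ) : ℝ :=
  Filter.limsup (fun e : ℕ => (frobSurjNumber R p e M : ℝ) / (p : ℝ) ^ (e * (d + α)))
    Filter.atTop

/-- `[k : k^p]`, the degree of the residue field over its subfield of `p`-th powers,
i.e. the rank of `k` as a module over itself via the Frobenius. -/
noncomputable def residueFrobDegree (R : Type u) [CommRing R] [IsLocalRing R] (p : ℕ)
    [ExpChar (ResidueField R) p] : ℕ :=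
  @Module.finrank (ResidueField R) (ResidueField R) _ _
    (Module.compHom (ResidueField R) (frobenius (ResidueField R) p))

/-- A system of parameters of a local ring: `d = dim R` elements of the maximal ideal
generating an ideal whose radical is the maximal ideal. -/
def IsSOP (R : Type u) [CommRing R] [IsLocalRing R] (xs : List R) : Prop :=
  (∀ x ∈ xs, x ∈ maximalIdeal R) ∧ ringKrullDim R = xs.length ∧
    (Ideal.span {x | x ∈ xs}).radical = maximalIdeal R

/-- A local ring is Cohen-Macaulay if a system of parameters is a regular sequence. -/
def IsCohenMacaulayLocalRing (R : Type u) [CommRing R] [IsLocalRing R] : Prop :=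
  ∃ xs : List R, IsSOP R xs ∧ RingTheory.Sequence.IsRegular R xs

/-- A finitely generated module `M` over a local ring `R` is maximal Cohen-Macaulay if
some system of parameters of `R` is a regular sequence on `M` (i.e. `depth M = dim R`). -/
def IsMaximalCohenMacaulay (R : Type u) [CommRing R] [IsLocalRing R]
    (M : Type v) [AddCommGroup M] [Module R M] : Prop :=
  Module.Finite R M ∧ ∃ xs : List R, IsSOP R xs ∧ RingTheory.Sequence.IsRegular M xs

/-- A (Noetherian) local ring is regular if its maximal ideal can be generated by
`dim R` elements. -/
def IsRegularLocalRing' (R : Type u) [CommRing R] [IsLocalRing R] : Prop :=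
  ∃ s : Finset R, Ideal.span (s : Set R) = maximalIdeal R ∧ ringKrullDim R = s.card

/-- The length of a module, as the Krull dimension of its lattice of submodules. -/
noncomputable def moduleLength (R : Type u) [CommRing R]
    (M : Type v) [AddCommGroup M] [Module R M] : WithBot ℕ∞ :=
  Order.krullDim (Submodule R M)

/-- The length of a module as a natural number (junk value if infinite). -/
noncomputable def moduleLengthNat (R : Type u) [CommRing R]
    (M : Type v) [AddCommGroup M] [Module R M] : ℕ :=
  ((moduleLength R M).unbotD 0).toNat

/-- The socle of a module over a local ring: the set of elements killed by the
maximal ideal. -/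
def socle (R : Type u) [CommRing R] [IsLocalRing R]
    (M : Type v) [AddCommGroup M] [Module R M] : Submodule R M where
  carrier := {x | ∀ r ∈ maximalIdeal R, r • x = 0}
  add_mem' := by
    intro a b ha hb r hr
    rw [smul_add, ha r hr, hb r hr, add_zero]
  zero_mem' := fun r _ => smul_zero r
  smul_mem' := by
    intro c x hx r hr
    rw [smul_comm, hx r hr, smul_zero]

/-- A canonical module of a Cohen-Macaulay local ring: a finitely generated maximal
Cohen-Macaulay module `ω` such that for every system of parameters `x̲`, the quotient
`ω/x̲ω` has the same length as `R/(x̲)` and a one-dimensional socle; equivalently,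
`ω/x̲ω` is the injective hull of the residue field over the Artinian ring `R/(x̲)`. -/
def IsCanonicalModule (R : Type u) [CommRing R] [IsLocalRing R]
    (ω : Type v) [AddCommGroup ω] [Module R ω] : Prop :=
  Module.Finite R ω ∧ IsMaximalCohenMacaulay R ω ∧
    ∀ xs : List R, IsSOP R xs →
      moduleLength R (ω ⧸ (Ideal.span {x | x ∈ xs} • (⊤ : Submodule R ω))) =
        moduleLength R (R ⧸ Ideal.span {x | x ∈ xs}) ∧
      moduleLength R (socle R (ω ⧸ (Ideal.span {x | x ∈ xs} • (⊤ : Submodule R ω)))) = 1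

/-- The Frobenius power `I^{[q]}` of an ideal: the ideal generated by `q`-th powers of
elements of `I`. -/
def frobeniusPower {R : Type u} [CommRing R] (I : Ideal R) (q : ℕ) : Ideal R :=
  Ideal.span ((fun x => x ^ q) '' (I : Set R))

/-- The Hilbert-Kunz multiplicity `e_HK(I, M) = lim_e l(M/I^{[p^e]}M)/p^{ed}`,
where `d = dim R` (the limit exists by Monsky's theorem, so we take a `limsup`). -/
noncomputable def hilbertKunzMult (R : Type u) [CommRing R] (p d : ℕ) (I : Ideal R)
    (M : Type v) [AddCommGroup M] [Module R M] : ℝ :=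
  Filter.limsup
    (fun e : ℕ =>
      (moduleLengthNat R (M ⧸ (frobeniusPower I (p ^ e) • (⊤ : Submodule R M))) : ℝ) /
        (p : ℝ) ^ (e * d))
    Filter.atTop

/-- `x` lies in the tight closure `I^*` of `I`: there is `c` outside every minimal prime
with `c x^{p^e} ∈ I^{[p^e]}` for all `e ≫ 0`. -/
def MemTightClosure (R : Type u) [CommRing R] (p : ℕ) (I : Ideal R) (x : R) : Prop :=
  ∃ c : R, (∀ P ∈ minimalPrimes R, c ∉ P) ∧
    ∃ e₀ : ℕ, ∀ e ≥ e₀, c * x ^ p ^ e ∈ frobeniusPower I (p ^ e)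

/-- A local ring is `F`-rational if every ideal generated by a system of parameters is
tightly closed. -/
def IsFRational (R : Type u) [CommRing R] [IsLocalRing R] (p : ℕ) : Prop :=
  ∀ xs : List R, IsSOP R xs → ∀ x : R,
    MemTightClosure R p (Ideal.span {y | y ∈ xs}) x → x ∈ Ideal.span {y | y ∈ xs}

/-- `R` is strongly `F`-regular: for every `c` outside every minimal prime there is `e`
such that the map `R → F_*^e R`, `1 ↦ F_*^e c`, splits as a map of `R`-modules;
equivalently there is an `R`-linear map `ψ : F_*^e R → R` with `ψ(c) = 1`. -/
def IsStronglyFRegular (R : Type u) [CommRing R] (p : ℕ) [ExpChar R p] : Prop :=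
  ∀ c : R, (∀ P ∈ minimalPrimes R, c ∉ P) →
    ∃ (e : ℕ) (ψ : FrobPush p e R →ₗ[R] R), ψ (FrobPush.mk p e c) = 1

/-!
For `x ∈ M` the maps `Δ ↦ Δ • x` form a `k`-subspace `A` of `Hom_k(V, soc M)` whose
evaluation at `Δ ≠ 0` is `ΔM`. Take `f ∈ A` of maximal rank. If `f δ = 0` with `δ ≠ 0`,
then `l(δM) ≥ dim V > rank f` gives `g ∈ A` with `g δ ∉ range f`, and `f + t • g` has
larger rank for all `t` but the finitely many roots of a determinant equal to `1` at
`t = 0`; as `k` is infinite, this contradicts maximality. For `V = soc R` injectivity on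
the socle suffices, because every nonzero element of an Artinian local ring has a nonzero
multiple in the socle.
-/

open Module

open Polynomial in
theorem LinearIndependent.finite_setOf_not_linearIndependent_add_smul {k W ι : Type*} [Field k]
    [AddCommGroup W] [Module k W] [Fintype ι] {w : ι → W} (hw : LinearIndependent k w)
    (v : ι → W) : {t : k | ¬LinearIndependent k (w + t • v)}.Finite := by
  classical
  obtain ⟨ρ, hρ⟩ := (Fintype.linearCombination k w).exists_leftInverse_of_injective
    (LinearMap.ker_eq_bot.mpr hw.fintypeLinearCombination_injective)
  have hρw : ∀ j, ρ (w j) = Pi.single j 1 := fun j => by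
    simpa using LinearMap.congr_fun hρ (Pi.single j 1)
  set B : Matrix ι ι k := Matrix.of fun i j => ρ (v j) i
  set p : k[X] := (1 + (X : k[X]) • B.map C).det
  have hp : p ≠ 0 := fun h => by
    simpa [p, h] using eval_det_add_X_smul (1 : Matrix ι ι k[X]) B
  have hp_eval (t : k) : p.eval t = (1 + t • B).det := by
    rw [← coe_evalRingHom, RingHom.map_det]
    congr 1
    ext i j
    simp only [RingHom.mapMatrix_apply, Matrix.map_apply, Matrix.add_apply, Matrix.smul_apply,
      Matrix.one_apply, coe_evalRingHom, eval_add, apply_ite, eval_one, eval_zero, smul_eq_mul,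
      eval_mul, eval_X, eval_C]
  refine (finite_setOfPred_isRoot hp).subset fun t ht => ?_
  by_contra hroot
  have hdet : (1 + t • B).det ≠ 0 := by
    rwa [← hp_eval]
  have hcols : ⇑ρ ∘ (w + t • v) = (1 + t • B).col := by
    ext j i
    simp [B, hρw, Matrix.one_apply, Pi.single_apply, eq_comm]
  refine ht (LinearIndependent.of_comp ρ ?_)
  rw [hcols]
  exact Matrix.linearIndependent_cols_iff_isUnit.mpr
    ((1 + t • B).isUnit_iff_isUnit_det.mpr hdet.isUnit)

theorem LinearMap.exists_finrank_range_lt_add_smul {k V W : Type*} [Field k] [Infinite k]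
    [AddCommGroup V] [Module k V] [FiniteDimensional k V] [AddCommGroup W] [Module k W]
    {f g : V →ₗ[k] W} {δ : V} (hδ : f δ = 0) (hg : g δ ∉ range f) :
    ∃ t : k, finrank k (range f) < finrank k (range (f + t • g)) := by
  set r := finrank k (range f)
  let e := finBasis k (range f)
  choose c hc using fun i => (e i).2
  set w : Fin (r + 1) → W := Fin.cons (g δ) fun i => f (c i)
  set v : Fin (r + 1) → W := Fin.cons 0 fun i => g (c i)
  have hw : LinearIndependent k w := by
    have he : LinearIndependent k fun i => f (c i) := by
      rw [show (fun i => f (c i)) = (range f).subtype ∘ e from funext hc]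
      exact e.linearIndependent.map' _ (range f).ker_subtype
    refine linearIndependent_finCons.mpr ⟨he, fun hmem => hg ?_⟩
    exact Submodule.span_le.mpr
      (Set.range_subset_iff.mpr fun i => LinearMap.mem_range_self f (c i)) hmem
  obtain ⟨t, ht⟩ := ((hw.finite_setOf_not_linearIndependent_add_smul v).union
    (Set.finite_singleton 0)).infinite_compl.nonempty
  simp only [Set.mem_compl_iff, Set.mem_union, Set.mem_ofPred_eq, not_not,
    Set.mem_singleton_iff, not_or] at ht
  obtain ⟨hind, ht0⟩ := ht
  have hmem : ∀ j, (w + t • v) j ∈ range (f + t • g) := Fin.cases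
    ⟨t⁻¹ • δ, by simp [w, v, hδ, ht0]⟩ fun i => ⟨c i, by simp [w, v]⟩
  refine ⟨t, ?_⟩
  calc r < r + 1 := r.lt_succ_self
    _ = finrank k (Submodule.span k (Set.range (w + t • v))) := by
      rw [finrank_span_eq_card hind, Fintype.card_fin]
    _ ≤ _ := Submodule.finrank_mono (Submodule.span_le.mpr (Set.range_subset_iff.mpr hmem))

theorem Submodule.exists_injective_mem_of_length_le {k V W : Type*} [Field k] [Infinite k]
    [AddCommGroup V] [Module k V] [FiniteDimensional k V] [AddCommGroup W] [Module k W]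
    (A : Submodule k (V →ₗ[k] W))
    (hA : ∀ v : V, v ≠ 0 →
      Module.length k V ≤ Module.length k (A.map (LinearMap.applyₗ v))) :
    ∃ f ∈ A, Function.Injective f := by
  let rk : (V →ₗ[k] W) → ℕ := fun f => finrank k (LinearMap.range f)
  have hfin : (rk '' A).Finite := (Set.finite_Iic (finrank k V)).subset <| by
    rintro _ ⟨f, -, rfl⟩
    exact f.finrank_range_le
  obtain ⟨_, ⟨f, hfA, rfl⟩, hmax⟩ :=
    Set.exists_max_image _ id hfin ⟨_, 0, A.zero_mem, rfl⟩
  refine ⟨f, hfA, ?_⟩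
  by_contra hinj
  obtain ⟨δ, hδ, hδ0⟩ : ∃ δ, f δ = 0 ∧ δ ≠ 0 := by
    simpa [injective_iff_map_eq_zero] using hinj
  have hrk : finrank k (LinearMap.range f) < finrank k V := by
    have hker : Submodule.span k {δ} ≤ LinearMap.ker f := by
      simpa [Submodule.span_singleton_le_iff_mem] using hδ
    have := Submodule.finrank_mono hker
    rw [finrank_span_singleton hδ0] at this
    have := f.finrank_range_add_finrank_ker
    omega
  obtain ⟨g, hgA, hg⟩ : ∃ g ∈ A, g δ ∉ LinearMap.range f := by
    by_contra! h
    have hle : A.map (LinearMap.applyₗ δ) ≤ LinearMap.range f := by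
      rintro _ ⟨g, hg, rfl⟩
      exact h g hg
    have := (hA δ hδ0).trans
      (Module.length_le_of_injective _ (Submodule.inclusion_injective hle))
    rw [Module.length_eq_finrank, Module.length_eq_finrank] at this
    have : finrank k V ≤ finrank k (LinearMap.range f) := by exact_mod_cast this
    omega
  obtain ⟨t, ht⟩ := f.exists_finrank_range_lt_add_smul hδ hg
  exact absurd (hmax _ ⟨_, A.add_mem hfA (A.smul_mem t hgA), rfl⟩) ht.not_ge

theorem Submodule.exists_injective_mem_of_length_le_of_isTorsionBySet {R V W : Type*} [CommRing R]
    [IsLocalRing R] [Infinite (ResidueField R)]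
    [AddCommGroup V] [Module R V] [Module.Finite R V] [AddCommGroup W] [Module R W]
    (hV : Module.IsTorsionBySet R V (maximalIdeal R))
    (hW : Module.IsTorsionBySet R W (maximalIdeal R))
    (A : Submodule R (V →ₗ[R] W))
    (hA : ∀ v : V, v ≠ 0 →
      Module.length R V ≤ Module.length R (A.map (LinearMap.applyₗ v))) :
    ∃ f ∈ A, Function.Injective f := by
  let _ : Module (ResidueField R) V := hV.module
  let _ : Module (ResidueField R) W := hW.module
  have _ : IsScalarTower R (ResidueField R) V := hV.isScalarTower
  have _ : IsScalarTower R (ResidueField R) W := hW.isScalarTower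
  have hsurj : Function.Surjective (algebraMap R (ResidueField R)) := residue_surjective
  have : Module.Finite (ResidueField R) V := .of_restrictScalars_finite R _ _
  let e := LinearMap.extendScalarsOfSurjectiveEquiv (M := V) (N := W) hsurj
  let Ak := (Submodule.orderIsoOfAlgebraMapSurjective hsurj).symm (A.map e.toLinearMap)
  have hmap (v : V) :
      (Ak.map (LinearMap.applyₗ v)).restrictScalars R = A.map (LinearMap.applyₗ v) := by
    ext x
    constructor
    · rintro ⟨_, ⟨g, hg, rfl⟩, rfl⟩
      exact ⟨g, hg, rfl⟩
    · rintro ⟨g, hg, rfl⟩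
      exact ⟨e g, ⟨g, hg, rfl⟩, rfl⟩
  obtain ⟨f, hf, hinj⟩ := Ak.exists_injective_mem_of_length_le fun v hv => by
    rw [← Module.length_eq_of_surjective hsurj, ← Module.length_eq_of_surjective hsurj,
      ← ((Submodule.restrictScalarsEquiv R (ResidueField R) W _).restrictScalars R).length_eq,
      hmap]
    exact hA v hv
  obtain ⟨g, hg, rfl⟩ := hf
  exact ⟨g, hg, hinj⟩

section Socle

variable {R M : Type*} [CommRing R] [IsLocalRing R] [AddCommGroup M] [Module R M]

theorem isTorsionBySet_socle : Module.IsTorsionBySet R (socle R M) (maximalIdeal R) :=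
  fun x r => Subtype.ext (x.2 r r.2)

theorem smul_mem_socle {Δ : R} (hΔ : Δ ∈ socle R R) (x : M) : Δ • x ∈ socle R M :=
  fun r hr => by rw [smul_smul, show r * Δ = 0 from hΔ r hr, zero_smul]

variable (M) in
def socleSMul (V : Ideal R) (hV : V ≤ socle R R) : M →ₗ[R] V →ₗ[R] socle R M :=
  LinearMap.mk₂ R (fun x v => ⟨(v : R) • x, smul_mem_socle (hV v.2) x⟩)
    (fun _ _ _ => Subtype.ext (smul_add _ _ _))
    (fun _ _ _ => Subtype.ext (smul_comm _ _ _))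
    (fun _ _ _ => Subtype.ext (add_smul _ _ _))
    (fun _ _ _ => Subtype.ext (mul_smul _ _ _))

theorem exists_smul_mem_socle_ne_zero_of_pow_smul_eq_zero {x : M} (hx : x ≠ 0) (n : ℕ)
    (hn : ∀ a ∈ maximalIdeal R ^ n, a • x = 0) :
    ∃ a : R, a • x ∈ socle R M ∧ a • x ≠ 0 := by
  induction n generalizing x with
  | zero => exact absurd (by simpa using hn 1 (by simp)) hx
  | succ n ih =>
    by_cases hsoc : x ∈ socle R M
    · exact ⟨1, by simpa using hsoc, by simpa using hx⟩
    obtain ⟨b, hb, hbx⟩ : ∃ b ∈ maximalIdeal R, b • x ≠ 0 := by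
      simpa [socle] using hsoc
    obtain ⟨a, hsoc, ha⟩ := ih hbx fun c hc => by
      rw [smul_smul]
      exact hn _ (pow_succ (maximalIdeal R) n ▸ Ideal.mul_mem_mul hc hb)
    exact ⟨a * b, by rwa [mul_smul], by rwa [mul_smul]⟩

theorem exists_smul_mem_socle_ne_zero [IsArtinianRing R] {x : M} (hx : x ≠ 0) :
    ∃ a : R, a • x ∈ socle R M ∧ a • x ≠ 0 := by
  obtain ⟨n, hn⟩ := (isArtinianRing_iff_isNilpotent_maximalIdeal R).mp inferInstance
  refine exists_smul_mem_socle_ne_zero_of_pow_smul_eq_zero hx n fun a ha => ?_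
  rw [hn, Ideal.zero_eq_bot, Ideal.mem_bot] at ha
  rw [ha, zero_smul]

theorem injective_toSpanSingleton_of_socle [IsArtinianRing R] {x : M}
    (hx : ∀ v ∈ socle R R, v • x = 0 → v = 0) :
    Function.Injective (LinearMap.toSpanSingleton R M x) := by
  refine (injective_iff_map_eq_zero _).mpr fun r hr => ?_
  by_contra hr0
  obtain ⟨a, hsoc, ha⟩ := exists_smul_mem_socle_ne_zero (R := R) hr0
  rw [LinearMap.toSpanSingleton_apply] at hr
  exact ha (hx _ hsoc (by rw [smul_eq_mul, mul_smul, hr, smul_zero]))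

end Socle

theorem exists_smul_ne_zero_of_length_le {R M : Type*} [CommRing R] [IsLocalRing R]
    [IsNoetherianRing R] [Infinite (ResidueField R)] [AddCommGroup M] [Module R M]
    (V : Ideal R) (hV : V ≤ socle R R)
    (hlen : ∀ Δ ∈ V, Δ ≠ 0 → Module.length R V ≤
      Module.length R (LinearMap.range (Δ • (LinearMap.id : M →ₗ[R] M)))) :
    ∃ x : M, ∀ v ∈ V, v • x = 0 → v = 0 := by
  let Ψ := socleSMul M V hV
  have hVt : Module.IsTorsionBySet R V (maximalIdeal R) := fun v r => Subtype.ext (hV v.2 r r.2)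
  obtain ⟨_, ⟨x, rfl⟩, hinj⟩ :=
    (LinearMap.range Ψ).exists_injective_mem_of_length_le_of_isTorsionBySet
      hVt isTorsionBySet_socle fun v hv => by
        have hv0 : (v : R) ≠ 0 := fun h => hv (Subtype.ext h)
        calc Module.length R V
            ≤ Module.length R (LinearMap.range ((v : R) • (LinearMap.id : M →ₗ[R] M))) :=
              hlen v v.2 hv0
          _ = Module.length R ((LinearMap.range (Ψ.flip v)).map (socle R M).subtype) := by
            rw [← LinearMap.range_comp]; rfl
          _ = Module.length R (LinearMap.range (Ψ.flip v)) :=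
            (Submodule.equivMapOfInjective _ (socle R M).injective_subtype _).length_eq.symm
          _ = Module.length R ((LinearMap.range Ψ).map (LinearMap.applyₗ v)) := by
            rw [← LinearMap.range_comp]; rfl
  refine ⟨x, fun v hv hvx => ?_⟩
  have : Ψ x ⟨v, hv⟩ = Ψ x 0 := by rw [map_zero]; exact Subtype.ext hvx
  exact congrArg Subtype.val (hinj this)

/-- Let `(R, m, k)` be an Artinian local ring with infinite residue
field, `M` an `R`-module, and `V ⊆ soc(R)` a `k`-subspace of the socle. If
`l(ΔM) ≥ dim_k V` for every nonzero `Δ ∈ soc(R)`, then there is an `R`-module map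
`φ : R → M` whose restriction to `V` is injective. In particular, if `V = soc(R)`,
there is an injective `R`-module map `φ : R → M`. -/
theorem exists_hom_injective_on_socle
    (R : Type u) [CommRing R] [IsLocalRing R] [IsArtinianRing R]
    [Infinite (ResidueField R)]
    (M : Type v) [AddCommGroup M] [Module R M]
    (V : Ideal R) (hV : V ≤ socle R R)
    (hlen : ∀ Δ ∈ socle R R, Δ ≠ 0 →
      moduleLength R V ≤ moduleLength R (LinearMap.range (Δ • (LinearMap.id : M →ₗ[R] M)))) :
    (∃ φ : R →ₗ[R] M, ∀ x ∈ V, φ x = 0 → x = 0) ∧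
    (V = socle R R → ∃ φ : R →ₗ[R] M, Function.Injective φ) := by
  obtain ⟨x, hx⟩ := exists_smul_ne_zero_of_length_le V hV fun Δ hΔ hΔ0 => by
    simpa only [moduleLength, ← Module.coe_length, WithBot.coe_le_coe] using hlen Δ (hV hΔ) hΔ0
  refine ⟨⟨LinearMap.toSpanSingleton R M x, hx⟩, ?_⟩
  rintro rfl
  exact ⟨_, injective_toSpanSingleton_of_socle hx⟩
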